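/- arXiv:math/9201211 — 4 statements merged into one kernel-verified Lean document; each statement's English description precedes it below -/
import Mathlib

section
/- Let Ω be a compact Hausdorff space, let E and F be real Banach spaces, and let T : C(Ω, E) → F be a nuclear operator. Then for every f ∈ C(Ω), the bounded linear operator T^#(f) : E → F defined by T^#(f)(e) = T(f ⊗ e) is a nuclear operator. (Theorem 3.) -/
open MeasureTheory Filter Topology

section Defs

variable {X Y : Type*} [NormedAddCommGroup X] [NormedSpace ℝ X]
  [NormedAddCommGroup Y] [NormedSpace ℝ Y]

/-- A bounded linear operator is nuclear if it admits a representation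
`S x = Σ_n x'_n(x) • y_n` with `Σ_n ‖x'_n‖·‖y_n‖ < ∞`. -/
def IsNuclear (S : X →L[ℝ] Y) : Prop :=
  ∃ (x' : ℕ → (X →L[ℝ] ℝ)) (y : ℕ → Y),
    Summable (fun n => ‖x' n‖ * ‖y n‖) ∧ ∀ x, HasSum (fun n => x' n x • y n) (S x)

/-- The nuclear norm: the infimum of `Σ_n ‖x'_n‖·‖y_n‖` over all nuclear
representations of `S`. -/
noncomputable def nuclearNorm (S : X →L[ℝ] Y) : ℝ :=
  sInf {c : ℝ | ∃ (x' : ℕ → (X →L[ℝ] ℝ)) (y : ℕ → Y),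
    Summable (fun n => ‖x' n‖ * ‖y n‖) ∧ (∀ x, HasSum (fun n => x' n x • y n) (S x)) ∧
    c = ∑' n, ‖x' n‖ * ‖y n‖}

variable {Ω : Type*} [TopologicalSpace Ω]

/-- The elementary tensor `f ⊗ e : ω ↦ f(ω) • e` in `C(Ω, E)`. -/
noncomputable def tensor (f : C(Ω, ℝ)) (e : X) : C(Ω, X) :=
  ⟨fun ω => f ω • e, (map_continuous f).smul continuous_const⟩

theorem tensor_apply (f : C(Ω, ℝ)) (e : X) (ω : Ω) : tensor f e ω = f ω • e := rfl

variable [CompactSpace Ω]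

theorem norm_tensor_le (f : C(Ω, ℝ)) (e : X) : ‖tensor f e‖ ≤ ‖f‖ * ‖e‖ := by
  refine (ContinuousMap.norm_le _ (by positivity)).2 fun ω => ?_
  rw [tensor_apply, norm_smul]
  exact mul_le_mul_of_nonneg_right (f.norm_coe_le_norm ω) (norm_nonneg e)

/-- The operator `T^# f : E → F`, `e ↦ T (f ⊗ e)`, induced by `T : C(Ω,E) → F`. -/
noncomputable def sharp (T : C(Ω, X) →L[ℝ] Y) (f : C(Ω, ℝ)) : X →L[ℝ] Y :=
  LinearMap.mkContinuous
    { toFun := fun e => T (tensor f e)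
      map_add' := fun a b => by
        show T (tensor f (a + b)) = T (tensor f a) + T (tensor f b)
        rw [show tensor f (a + b) = tensor f a + tensor f b from
          ContinuousMap.ext fun ω => smul_add _ _ _, map_add]
      map_smul' := fun c a => by
        show T (tensor f (c • a)) = c • T (tensor f a)
        rw [show tensor f (c • a) = c • tensor f a from
          ContinuousMap.ext fun ω => smul_comm _ _ _, _root_.map_smul] }
    (‖T‖ * ‖f‖)
    (fun e => by
      calc ‖T (tensor f e)‖ ≤ ‖T‖ * ‖tensor f e‖ := T.le_opNorm _
        _ ≤ ‖T‖ * (‖f‖ * ‖e‖) :=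
          mul_le_mul_of_nonneg_left (norm_tensor_le f e) (norm_nonneg T)
        _ = ‖T‖ * ‖f‖ * ‖e‖ := (mul_assoc _ _ _).symm)

theorem sharp_apply (T : C(Ω, X) →L[ℝ] Y) (f : C(Ω, ℝ)) (e : X) :
    sharp T f e = T (tensor f e) := rfl

/-- The set of sums `Σ_i ‖m(A_i)‖` over finite families of pairwise disjoint
measurable subsets of `B`. -/
def partitionSums {S : Type*} [MeasurableSpace S] (m : Set S → X) (B : Set S) : Set ℝ :=
  {c : ℝ | ∃ (k : ℕ) (A : Fin k → Set S), (∀ i, MeasurableSet (A i)) ∧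
    Pairwise (Function.onFun Disjoint A) ∧ (∀ i, A i ⊆ B) ∧ c = ∑ i, ‖m (A i)‖}

/-- The variation `|m|(B)` of a vector measure. -/
noncomputable def variation {S : Type*} [MeasurableSpace S] (m : Set S → X) (B : Set S) : ℝ :=
  sSup (partitionSums m B)

/-- A Banach space `X` has the Radon–Nikodym property if every countably additive
`X`-valued vector measure of bounded variation which is absolutely continuous with
respect to a finite measure `μ` has a Bochner-integrable density with respect to `μ`. -/
def HasRNP (X : Type*) [NormedAddCommGroup X] [NormedSpace ℝ X] : Prop :=
  ∀ (S : Type) (_ : MeasurableSpace S) (μ : Measure S), IsFiniteMeasure μ →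
    ∀ m : VectorMeasure S X, BddAbove (partitionSums (⇑m) Set.univ) →
      (∀ A : Set S, MeasurableSet A → μ A = 0 → m A = 0) →
      ∃ g : S → X, Integrable g μ ∧ ∀ A : Set S, MeasurableSet A → m A = ∫ x in A, g x ∂μ

end Defs

/-! `T^#(f)` factors as `T ∘ (e ↦ f ⊗ e)`, and a nuclear operator precomposed with a bounded
one stays nuclear: compose each functional of a nuclear representation with the bounded map. -/

theorem IsNuclear.comp {X Y Z : Type*} [NormedAddCommGroup X] [NormedSpace ℝ X]
    [NormedAddCommGroup Y] [NormedSpace ℝ Y] [NormedAddCommGroup Z] [NormedSpace ℝ Z]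
    {S : X →L[ℝ] Y} (hS : IsNuclear S) (A : Z →L[ℝ] X) : IsNuclear (S.comp A) := by
  obtain ⟨x', y, hsum, hrep⟩ := hS
  refine ⟨fun n => (x' n).comp A, y, ?_, fun z => hrep (A z)⟩
  refine .of_nonneg_of_le (fun n => by positivity) (fun n => ?_) (hsum.mul_right ‖A‖)
  calc ‖(x' n).comp A‖ * ‖y n‖ ≤ ‖x' n‖ * ‖A‖ * ‖y n‖ := by
        gcongr; exact (x' n).opNorm_comp_le A
    _ = ‖x' n‖ * ‖y n‖ * ‖A‖ := by ring

section Tensor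

variable {Ω X : Type*} [TopologicalSpace Ω] [CompactSpace Ω]
  [NormedAddCommGroup X] [NormedSpace ℝ X]

noncomputable def tensorLeft (f : C(Ω, ℝ)) : X →L[ℝ] C(Ω, X) :=
  LinearMap.mkContinuous
    { toFun := tensor f
      map_add' := fun _ _ => ContinuousMap.ext fun _ => smul_add _ _ _
      map_smul' := fun _ _ => ContinuousMap.ext fun _ => smul_comm _ _ _ }
    ‖f‖ (norm_tensor_le f)

theorem sharp_eq_comp_tensorLeft {Y : Type*} [NormedAddCommGroup Y] [NormedSpace ℝ Y]
    (T : C(Ω, X) →L[ℝ] Y) (f : C(Ω, ℝ)) : sharp T f = T.comp (tensorLeft f) :=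
  rfl

end Tensor

theorem sharp_isNuclear_of_isNuclear_general {Ω : Type*} [TopologicalSpace Ω] [CompactSpace Ω]
    {E F : Type*} [NormedAddCommGroup E] [NormedSpace ℝ E]
    [NormedAddCommGroup F] [NormedSpace ℝ F]
    (T : C(Ω, E) →L[ℝ] F) (hT : IsNuclear T) (f : C(Ω, ℝ)) :
    IsNuclear (sharp T f) := by
  rw [sharp_eq_comp_tensorLeft]
  exact hT.comp (tensorLeft f)

/-- Theorem 3: if `T : C(Ω,E) → F` is nuclear then `T^#(f)` is nuclear for every
`f ∈ C(Ω)`. -/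
theorem sharp_isNuclear_of_isNuclear {Ω : Type*} [TopologicalSpace Ω] [CompactSpace Ω] [T2Space Ω]
    {E F : Type*} [NormedAddCommGroup E] [NormedSpace ℝ E] [CompleteSpace E]
    [NormedAddCommGroup F] [NormedSpace ℝ F] [CompleteSpace F]
    (T : C(Ω, E) →L[ℝ] F) (hT : IsNuclear T) (f : C(Ω, ℝ)) :
    IsNuclear (sharp T f) :=
  sharp_isNuclear_of_isNuclear_general T hT f
end

section
/- Let Ω be a compact Hausdorff space, let E and F be real Banach spaces, and let T : C(Ω, E) → F be a bounded linear operator. Suppose there exist a sequence (ν_n) in C(Ω)* and a sequence (N_n) of nuclear operators from E to F such that Σ_n ‖ν_n‖·‖N_n‖_nuc < ∞ and, for every f ∈ C(Ω) and e ∈ E, T(f ⊗ e) = Σ_n ν_n(f) • N_n(e) (the series converging in F). Then T is a nuclear operator. (Theorem 4: T is nuclear whenever T^# : C(Ω) → N(E,F) is nuclear.) -/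
open MeasureTheory Filter Topology

section DenseAux

open Set

variable {X : Type*} [NormedAddCommGroup X] [NormedSpace ℝ X]
variable {Ω : Type*} [TopologicalSpace Ω]

theorem dense_span_tensor [CompactSpace Ω] [T2Space Ω] :
    Dense ((Submodule.span ℝ {g : C(Ω, X) | ∃ f e, g = tensor f e} : Submodule ℝ C(Ω, X)) :
      Set C(Ω, X)) := by
  intro g
  rw [Metric.mem_closure_iff]
  intro ε hε
  set U : Ω → Set Ω := fun ω => {ω' | ‖g ω' - g ω‖ < ε / 2} with hU
  have hopen : ∀ ω, IsOpen (U ω) := by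
    intro ω
    have : U ω = (fun ω' => ‖g ω' - g ω‖) ⁻¹' Iio (ε / 2) := rfl
    rw [this]
    exact ((map_continuous g).sub continuous_const).norm.isOpen_preimage _ isOpen_Iio
  have hcov : (univ : Set Ω) ⊆ ⋃ ω, U ω := fun ω _ =>
    mem_iUnion.2 ⟨ω, by simp [hU, half_pos hε]⟩
  obtain ⟨t, ht⟩ := isCompact_univ.elim_finite_subcover U hopen hcov
  set pt : Fin t.card → Ω := fun i => (t.equivFin.symm i : Ω) with hpt
  have hst : (univ : Set Ω) ⊆ ⋃ i, U (pt i) := by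
    intro ω _
    obtain ⟨x, hx⟩ := mem_iUnion₂.1 (ht (mem_univ ω))
    obtain ⟨hxt, hωx⟩ := hx
    refine mem_iUnion.2 ⟨t.equivFin ⟨x, hxt⟩, ?_⟩
    simpa [hpt] using hωx
  obtain ⟨f, hsupp, hone, hmem, -⟩ :=
    exists_continuous_sum_one_of_isOpen_isCompact (fun i => hopen (pt i)) isCompact_univ hst
  refine ⟨∑ i, tensor (f i) (g (pt i)), ?_, ?_⟩
  · exact Submodule.sum_mem _ fun i _ => Submodule.subset_span ⟨f i, g (pt i), rfl⟩
  · rw [dist_eq_norm]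
    have key : ‖g - ∑ i, tensor (f i) (g (pt i))‖ ≤ ε / 2 := by
      refine ContinuousMap.norm_le _ (le_of_lt (half_pos hε)) |>.2 fun ω => ?_
      have hone' : ∑ i, f i ω = 1 := by
        have := hone (mem_univ ω)
        simpa using this
      have heq : (g - ∑ i, tensor (f i) (g (pt i))) ω
          = ∑ i, f i ω • (g ω - g (pt i)) := by
        simp only [ContinuousMap.sub_apply, ContinuousMap.sum_apply, tensor_apply,
          smul_sub, Finset.sum_sub_distrib, ← Finset.sum_smul, hone', one_smul]
      rw [heq]
      calc ‖∑ i, f i ω • (g ω - g (pt i))‖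
          ≤ ∑ i, ‖f i ω • (g ω - g (pt i))‖ := norm_sum_le _ _
        _ ≤ ∑ i : Fin t.card, f i ω * (ε / 2) := by
            refine Finset.sum_le_sum fun i _ => ?_
            rw [norm_smul, Real.norm_eq_abs, abs_of_nonneg (hmem i ω).1]
            by_cases h0 : f i ω = 0
            · simp [h0]
            · have hω : ω ∈ U (pt i) :=
                hsupp i (subset_tsupport _ (Function.mem_support.2 h0))
              exact mul_le_mul_of_nonneg_left (le_of_lt hω) (hmem i ω).1
        _ = ε / 2 := by rw [← Finset.sum_mul, hone', one_mul]
    linarith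

end DenseAux

set_option maxHeartbeats 1000000 in
/-- Theorem 4: if `T^# : C(Ω) → N(E,F)` is nuclear, then `T` is nuclear. -/
theorem isNuclear_of_sharp_nuclear_representation {Ω : Type*} [TopologicalSpace Ω] [CompactSpace Ω] [T2Space Ω]
    {E F : Type*} [NormedAddCommGroup E] [NormedSpace ℝ E] [CompleteSpace E]
    [NormedAddCommGroup F] [NormedSpace ℝ F] [CompleteSpace F]
    (T : C(Ω, E) →L[ℝ] F)
    (ν : ℕ → (C(Ω, ℝ) →L[ℝ] ℝ)) (N : ℕ → (E →L[ℝ] F))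
    (hN : ∀ n, IsNuclear (N n))
    (hsum : Summable fun n => ‖ν n‖ * nuclearNorm (N n))
    (hrep : ∀ (f : C(Ω, ℝ)) (e : E),
      HasSum (fun n => ν n f • N n e) (T (tensor f e))) :
    IsNuclear T := by
  classical
  -- Step 1: choose good nuclear representations of each `N n`.
  have hchoice : ∀ n : ℕ, ∃ (x' : ℕ → (E →L[ℝ] ℝ)) (y : ℕ → F),
      Summable (fun k => ‖x' k‖ * ‖y k‖) ∧ (∀ e, HasSum (fun k => x' k e • y k) (N n e)) ∧
      ∑' k, ‖x' k‖ * ‖y k‖ < nuclearNorm (N n) + (1/2 : ℝ)^n / (‖ν n‖ + 1) := by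
    intro n
    have hne : {c : ℝ | ∃ (x' : ℕ → (E →L[ℝ] ℝ)) (y : ℕ → F),
        Summable (fun k => ‖x' k‖ * ‖y k‖) ∧
        (∀ x, HasSum (fun k => x' k x • y k) (N n x)) ∧
        c = ∑' k, ‖x' k‖ * ‖y k‖}.Nonempty := by
      obtain ⟨x', y, h1, h2⟩ := hN n
      exact ⟨_, x', y, h1, h2, rfl⟩
    have hεpos : 0 < (1/2 : ℝ)^n / (‖ν n‖ + 1) := by positivity
    obtain ⟨c, ⟨x', y, h1, h2, rfl⟩, hc⟩ := Real.lt_sInf_add_pos hne hεpos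
    exact ⟨x', y, h1, h2, hc⟩
  choose e' y hsumk hrepk hlt using hchoice
  -- Step 2: the double family of functionals on C(Ω,E) and vectors in F.
  set Φ : ℕ × ℕ → (C(Ω, E) →L[ℝ] ℝ) :=
    fun p => (ν p.1).comp ((e' p.1 p.2).compLeftContinuous ℝ Ω) with hΦ
  set Y : ℕ × ℕ → F := fun p => y p.1 p.2 with hYdef
  have hcompnorm : ∀ (u : E →L[ℝ] ℝ) (g : C(Ω, E)),
      ‖(u.compLeftContinuous ℝ Ω) g‖ ≤ ‖u‖ * ‖g‖ := by
    intro u g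
    refine (ContinuousMap.norm_le _ (by positivity)).2 fun ω => ?_
    calc ‖u (g ω)‖ ≤ ‖u‖ * ‖g ω‖ := u.le_opNorm _
      _ ≤ ‖u‖ * ‖g‖ := mul_le_mul_of_nonneg_left (g.norm_coe_le_norm ω) (norm_nonneg u)
  have hΦnorm : ∀ p, ‖Φ p‖ ≤ ‖ν p.1‖ * ‖e' p.1 p.2‖ := by
    intro p
    refine ContinuousLinearMap.opNorm_le_bound _ (by positivity) fun g => ?_
    calc ‖Φ p g‖ ≤ ‖ν p.1‖ * ‖(e' p.1 p.2).compLeftContinuous ℝ Ω g‖ :=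
          (ν p.1).le_opNorm _
      _ ≤ ‖ν p.1‖ * (‖e' p.1 p.2‖ * ‖g‖) :=
          mul_le_mul_of_nonneg_left (hcompnorm _ _) (norm_nonneg (ν p.1))
      _ = ‖ν p.1‖ * ‖e' p.1 p.2‖ * ‖g‖ := (mul_assoc _ _ _).symm
  -- Step 3: summability of the dominating series.
  have hbsum : Summable (fun p : ℕ × ℕ => ‖ν p.1‖ * (‖e' p.1 p.2‖ * ‖y p.1 p.2‖)) := by
    have h0 : 0 ≤ (fun p : ℕ × ℕ => ‖ν p.1‖ * (‖e' p.1 p.2‖ * ‖y p.1 p.2‖)) :=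
      fun p => by positivity
    have h1 : ∀ n, Summable fun k => ‖ν n‖ * (‖e' n k‖ * ‖y n k‖) :=
      fun n => (hsumk n).mul_left _
    refine (summable_prod_of_nonneg h0).2 ⟨h1, ?_⟩
    · have hle : ∀ n : ℕ, ∑' k, ‖ν n‖ * (‖e' n k‖ * ‖y n k‖)
          ≤ ‖ν n‖ * nuclearNorm (N n) + (1/2 : ℝ)^n := by
        intro n
        rw [tsum_mul_left]
        have h1 : ‖ν n‖ * ∑' k, ‖e' n k‖ * ‖y n k‖
            ≤ ‖ν n‖ * (nuclearNorm (N n) + (1/2 : ℝ)^n / (‖ν n‖ + 1)) :=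
          mul_le_mul_of_nonneg_left (le_of_lt (hlt n)) (norm_nonneg (ν n))
        have h2 : ‖ν n‖ * ((1/2 : ℝ)^n / (‖ν n‖ + 1)) ≤ (1/2 : ℝ)^n := by
          have hpos : (0:ℝ) < ‖ν n‖ + 1 := by positivity
          rw [mul_div_assoc', div_le_iff₀ hpos]
          have hp : (0:ℝ) ≤ (1/2 : ℝ)^n := by positivity
          nlinarith [norm_nonneg (ν n)]
        nlinarith
      refine Summable.of_nonneg_of_le (fun n => ?_) hle
        (hsum.add (summable_geometric_of_lt_one (by norm_num) (by norm_num)))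
      exact tsum_nonneg fun k => by positivity
  have ha : Summable (fun p : ℕ × ℕ => ‖Φ p‖ * ‖Y p‖) := by
    refine hbsum.of_nonneg_of_le (fun p => by positivity) (fun p => ?_)
    calc ‖Φ p‖ * ‖Y p‖ ≤ ‖ν p.1‖ * ‖e' p.1 p.2‖ * ‖Y p‖ :=
          mul_le_mul_of_nonneg_right (hΦnorm p) (norm_nonneg _)
      _ = ‖ν p.1‖ * (‖e' p.1 p.2‖ * ‖y p.1 p.2‖) := mul_assoc _ _ _
  -- Step 4: absolute convergence pointwise.
  have habs : ∀ g : C(Ω, E), Summable (fun p : ℕ × ℕ => Φ p g • Y p) := by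
    intro g
    refine Summable.of_norm_bounded (ha.mul_right ‖g‖) (fun p => ?_)
    rw [norm_smul, Real.norm_eq_abs]
    calc |Φ p g| * ‖Y p‖ ≤ ‖Φ p‖ * ‖g‖ * ‖Y p‖ :=
          mul_le_mul_of_nonneg_right ((Φ p).le_opNorm g) (norm_nonneg _)
      _ = ‖Φ p‖ * ‖Y p‖ * ‖g‖ := by ring
  -- Step 5: assemble the candidate nuclear operator `S`.
  set S : C(Ω, E) →L[ℝ] F := LinearMap.mkContinuous
    { toFun := fun g => ∑' p : ℕ × ℕ, Φ p g • Y p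
      map_add' := fun a b => by
        show (∑' p : ℕ × ℕ, Φ p (a + b) • Y p)
            = (∑' p : ℕ × ℕ, Φ p a • Y p) + ∑' p : ℕ × ℕ, Φ p b • Y p
        have heq : (fun p : ℕ × ℕ => Φ p (a + b) • Y p)
            = fun p => Φ p a • Y p + Φ p b • Y p := by
          funext p; rw [map_add, add_smul]
        rw [heq, Summable.tsum_add (habs a) (habs b)]
      map_smul' := fun c a => by
        show (∑' p : ℕ × ℕ, Φ p (c • a) • Y p) = c • ∑' p : ℕ × ℕ, Φ p a • Y p
        have heq : (fun p : ℕ × ℕ => Φ p (c • a) • Y p)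
            = fun p => c • (Φ p a • Y p) := by
          funext p; rw [_root_.map_smul, smul_eq_mul, mul_smul]
        rw [heq, ← ((habs a).hasSum.const_smul c).tsum_eq] }
    (∑' p : ℕ × ℕ, ‖Φ p‖ * ‖Y p‖)
    (fun g => by
      simp only [LinearMap.coe_mk, AddHom.coe_mk]
      calc ‖∑' p : ℕ × ℕ, Φ p g • Y p‖ ≤ ∑' p : ℕ × ℕ, ‖Φ p g • Y p‖ := by
            refine norm_tsum_le_tsum_norm ?_
            refine Summable.of_nonneg_of_le (fun p => norm_nonneg _) (fun p => ?_)
              (ha.mul_right ‖g‖)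
            rw [norm_smul, Real.norm_eq_abs]
            calc |Φ p g| * ‖Y p‖ ≤ ‖Φ p‖ * ‖g‖ * ‖Y p‖ :=
                  mul_le_mul_of_nonneg_right ((Φ p).le_opNorm g) (norm_nonneg _)
              _ = ‖Φ p‖ * ‖Y p‖ * ‖g‖ := by ring
        _ ≤ ∑' p : ℕ × ℕ, ‖Φ p‖ * ‖Y p‖ * ‖g‖ := by
            refine Summable.tsum_le_tsum (fun p => ?_) ?_ (ha.mul_right ‖g‖)
            · rw [norm_smul, Real.norm_eq_abs]
              calc |Φ p g| * ‖Y p‖ ≤ ‖Φ p‖ * ‖g‖ * ‖Y p‖ :=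
                    mul_le_mul_of_nonneg_right ((Φ p).le_opNorm g) (norm_nonneg _)
                _ = ‖Φ p‖ * ‖Y p‖ * ‖g‖ := by ring
            · refine Summable.of_nonneg_of_le (fun p => norm_nonneg _) (fun p => ?_)
                (ha.mul_right ‖g‖)
              rw [norm_smul, Real.norm_eq_abs]
              calc |Φ p g| * ‖Y p‖ ≤ ‖Φ p‖ * ‖g‖ * ‖Y p‖ :=
                    mul_le_mul_of_nonneg_right ((Φ p).le_opNorm g) (norm_nonneg _)
                _ = ‖Φ p‖ * ‖Y p‖ * ‖g‖ := by ring
        _ = (∑' p : ℕ × ℕ, ‖Φ p‖ * ‖Y p‖) * ‖g‖ := tsum_mul_right) with hSdef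
  have hS : ∀ g, HasSum (fun p : ℕ × ℕ => Φ p g • Y p) (S g) := fun g => (habs g).hasSum
  -- Step 6: `S` agrees with `T` on elementary tensors, hence everywhere.
  have hST : S = T := by
    refine ContinuousLinearMap.ext_on dense_span_tensor ?_
    rintro _ ⟨f, e, rfl⟩
    have hfib : ∀ n : ℕ, HasSum (fun k => Φ (n, k) (tensor f e) • Y (n, k)) (ν n f • N n e) := by
      intro n
      have h1 : HasSum (fun k => ν n f • (e' n k e • y n k)) (ν n f • N n e) :=
        (hrepk n e).const_smul _
      convert h1 using 2 with k
      have harg : (e' n k).compLeftContinuous ℝ Ω (tensor f e) = e' n k e • f := by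
        ext ω
        change e' n k (f ω • e) = _
        simp [tensor_apply, _root_.map_smul, smul_eq_mul, mul_comm]
      show (ν n ((e' n k).compLeftContinuous ℝ Ω (tensor f e))) • y n k
          = ν n f • (e' n k e • y n k)
      rw [harg, _root_.map_smul, smul_eq_mul, mul_comm, mul_smul, smul_smul, mul_comm,
        ← smul_smul]
    have h2 : HasSum (fun n => ν n f • N n e) (S (tensor f e)) :=
      (hS (tensor f e)).prod_fiberwise hfib
    exact h2.unique (hrep f e)
  -- Step 7: reindex by ℕ.
  have eqv : ℕ ≃ ℕ × ℕ := (Denumerable.eqv (ℕ × ℕ)).symm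
  refine ⟨fun n => Φ (eqv n), fun n => Y (eqv n), ?_, fun x => ?_⟩
  · exact (eqv.summable_iff (f := fun p : ℕ × ℕ => ‖Φ p‖ * ‖Y p‖)).2 ha
  · have := hS x
    rw [hST] at this
    exact (eqv.hasSum_iff (f := fun p : ℕ × ℕ => Φ p x • Y p)).2 this
end

section
/- Let Ω be a compact Hausdorff space, let E and F be real Banach spaces, let y ∈ F with y ≠ 0, and let S : C(Ω) → E* be a bounded linear operator. For g ∈ C(Ω), let S(g) ⊗ y : E → F denote the rank-one operator x ↦ S(g)(x) • y. Suppose there exist a sequence (ν_n) in C(Ω)* and a sequence (N_n) of nuclear operators from E to F with Σ_n ‖ν_n‖·‖N_n‖_nuc < ∞ such that for every g ∈ C(Ω), ‖S(g) ⊗ y − Σ_{n<K} ν_n(g) • N_n‖_nuc → 0 as K → ∞. Then S : C(Ω) → E* is a nuclear operator. (Key lemma in the proof of Theorem 5, (ii) ⇒ (i).) -/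
open MeasureTheory Filter Topology

section Aux

variable {X Y : Type*} [NormedAddCommGroup X] [NormedSpace ℝ X]
  [NormedAddCommGroup Y] [NormedSpace ℝ Y]

theorem opNorm_le_rep {T : X →L[ℝ] Y} {x' : ℕ → (X →L[ℝ] ℝ)} {v : ℕ → Y}
    (hs : Summable fun n => ‖x' n‖ * ‖v n‖)
    (h : ∀ x, HasSum (fun n => x' n x • v n) (T x)) :
    ‖T‖ ≤ ∑' n, ‖x' n‖ * ‖v n‖ := by
  refine T.opNorm_le_bound (tsum_nonneg fun n => by positivity) fun x => ?_
  have h1 : ∀ n, ‖x' n x • v n‖ ≤ ‖x' n‖ * ‖v n‖ * ‖x‖ := fun n => by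
    rw [norm_smul, mul_right_comm]
    exact mul_le_mul_of_nonneg_right ((x' n).le_opNorm x) (norm_nonneg _)
  have hs2 : Summable fun n => ‖x' n‖ * ‖v n‖ * ‖x‖ := hs.mul_right _
  have hs1 : Summable fun n => ‖x' n x • v n‖ :=
    hs2.of_nonneg_of_le (fun n => norm_nonneg _) h1
  calc ‖T x‖ = ‖∑' n, x' n x • v n‖ := by rw [(h x).tsum_eq]
    _ ≤ ∑' n, ‖x' n x • v n‖ := norm_tsum_le_tsum_norm hs1
    _ ≤ ∑' n, ‖x' n‖ * ‖v n‖ * ‖x‖ := Summable.tsum_le_tsum h1 hs1 hs2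
    _ = (∑' n, ‖x' n‖ * ‖v n‖) * ‖x‖ := tsum_mul_right

theorem norm_le_nuclearNorm {T : X →L[ℝ] Y} (h : IsNuclear T) : ‖T‖ ≤ nuclearNorm T := by
  obtain ⟨x', v, hs, hh⟩ := h
  refine le_csInf ⟨_, x', v, hs, hh, rfl⟩ ?_
  rintro c ⟨x', v, hs, hh, rfl⟩
  exact opNorm_le_rep hs hh

theorem IsNuclear.zero : IsNuclear (0 : X →L[ℝ] Y) := by
  exact ⟨0, 0, by simpa using summable_zero, fun x => by simpa using hasSum_zero⟩

theorem IsNuclear.add {T U : X →L[ℝ] Y} (hT : IsNuclear T) (hU : IsNuclear U) :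
    IsNuclear (T + U) := by
  obtain ⟨x', v, hs1, hh1⟩ := hT
  obtain ⟨u', w, hs2, hh2⟩ := hU
  refine ⟨fun n => if Even n then x' (n / 2) else u' (n / 2),
    fun n => if Even n then v (n / 2) else w (n / 2), ?_, fun x => ?_⟩
  · refine Summable.even_add_odd ?_ ?_
    · simpa [Nat.mul_div_cancel_left] using hs1
    · have : ∀ k, ¬ Even (2 * k + 1) := fun k => by simp [Nat.even_add_one, parity_simps]
      simpa [this, Nat.mul_add_div, Nat.succ_div] using hs2
  · refine HasSum.even_add_odd ?_ ?_
    · simpa [Nat.mul_div_cancel_left] using hh1 x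
    · have : ∀ k, ¬ Even (2 * k + 1) := fun k => by simp [Nat.even_add_one, parity_simps]
      simpa [this, Nat.mul_add_div] using hh2 x

theorem IsNuclear.neg {T : X →L[ℝ] Y} (hT : IsNuclear T) : IsNuclear (-T) := by
  obtain ⟨x', v, hs, hh⟩ := hT
  exact ⟨x', fun n => -v n, by simpa using hs,
    fun x => by simpa [smul_neg] using (hh x).neg⟩

theorem IsNuclear.smul (c : ℝ) {T : X →L[ℝ] Y} (hT : IsNuclear T) : IsNuclear (c • T) := by
  obtain ⟨x', v, hs, hh⟩ := hT
  refine ⟨x', fun n => c • v n, ?_, fun x => ?_⟩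
  · refine Summable.of_nonneg_of_le (fun n => by positivity)
      (fun n => ?_) (hs.mul_left |c|)
    rw [norm_smul, Real.norm_eq_abs]
    ring_nf
    exact le_of_eq (by ring)
  · have := (hh x).const_smul c
    simpa [smul_comm c] using this

theorem IsNuclear.smulRight (x' : X →L[ℝ] ℝ) (v : Y) : IsNuclear (x'.smulRight v) := by
  refine ⟨fun n => if n = 0 then x' else 0, fun n => if n = 0 then v else 0, ?_, fun x => ?_⟩
  · apply summable_of_ne_finset_zero (s := {0})
    intro n hn
    simp [Finset.mem_singleton.not.mp hn]
  · have : (fun n => (if n = 0 then x' else 0) x • (if n = 0 then v else 0))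
        = fun n => if n = 0 then x' x • v else 0 := by
      funext n; by_cases h : n = 0 <;> simp [h]
    rw [this]
    simpa using hasSum_ite_eq 0 (x' x • v)

theorem IsNuclear.finsetSum {ι : Type*} (s : Finset ι) (f : ι → (X →L[ℝ] Y))
    (h : ∀ i ∈ s, IsNuclear (f i)) : IsNuclear (∑ i ∈ s, f i) := by
  classical
  induction s using Finset.induction with
  | empty => simpa using IsNuclear.zero
  | insert _ _ hns ih =>
    rw [Finset.sum_insert hns]
    exact (h _ (Finset.mem_insert_self _ _)).add
      (ih fun i hi => h i (Finset.mem_insert_of_mem hi))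

theorem IsNuclear.sub {T U : X →L[ℝ] Y} (hT : IsNuclear T) (hU : IsNuclear U) :
    IsNuclear (T - U) := by
  rw [sub_eq_add_neg]; exact hT.add hU.neg

end Aux


/-- Key lemma for Theorem 5, (ii) ⇒ (i): if `g ↦ S(g) ⊗ y` is a nuclear operator
into `N(E,F)` (for some `y ≠ 0`), then `S : C(Ω) → E*` is nuclear. -/
theorem isNuclear_of_smulRight_nuclear {Ω : Type*} [TopologicalSpace Ω] [CompactSpace Ω] [T2Space Ω]
    {E F : Type*} [NormedAddCommGroup E] [NormedSpace ℝ E] [CompleteSpace E]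
    [NormedAddCommGroup F] [NormedSpace ℝ F] [CompleteSpace F]
    (y : F) (hy : y ≠ 0)
    (S : C(Ω, ℝ) →L[ℝ] (E →L[ℝ] ℝ))
    (ν : ℕ → (C(Ω, ℝ) →L[ℝ] ℝ)) (N : ℕ → (E →L[ℝ] F))
    (hN : ∀ n, IsNuclear (N n))
    (hsum : Summable fun n => ‖ν n‖ * nuclearNorm (N n))
    (happrox : ∀ g : C(Ω, ℝ),
      Tendsto (fun K => nuclearNorm ((S g).smulRight y - ∑ n ∈ Finset.range K, ν n g • N n))
        atTop (𝓝 0)) :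
    IsNuclear S := by
  obtain ⟨ψ0, hψ0norm, hψ0y⟩ := exists_dual_vector ℝ y (norm_ne_zero_iff.mpr hy)
  set ψ : F →L[ℝ] ℝ := ‖y‖⁻¹ • ψ0 with hψdef
  have hψ1 : ψ y = 1 := by
    have hyn : ‖y‖ ≠ 0 := norm_ne_zero_iff.mpr hy
    simp [hψdef, hψ0y, smul_eq_mul, inv_mul_cancel₀ hyn]
  set φ : ℕ → (E →L[ℝ] ℝ) := fun n => ψ.comp (N n) with hφdef
  have hφle : ∀ n, ‖φ n‖ ≤ ‖ψ‖ * nuclearNorm (N n) := fun n =>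
    (ψ.opNorm_comp_le (N n)).trans
      (mul_le_mul_of_nonneg_left (norm_le_nuclearNorm (hN n)) (norm_nonneg ψ))
  have hsum' : Summable fun n => ‖ν n‖ * ‖φ n‖ := by
    refine Summable.of_nonneg_of_le (fun n => by positivity) (fun n => ?_)
      (hsum.mul_left ‖ψ‖)
    calc ‖ν n‖ * ‖φ n‖ ≤ ‖ν n‖ * (‖ψ‖ * nuclearNorm (N n)) :=
          mul_le_mul_of_nonneg_left (hφle n) (norm_nonneg (ν n))
      _ = ‖ψ‖ * (‖ν n‖ * nuclearNorm (N n)) := by ring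
  refine ⟨ν, φ, hsum', fun g => ?_⟩
  -- absolute summability of the candidate series
  have hnorms : Summable fun n => ‖ν n g • φ n‖ := by
    refine Summable.of_nonneg_of_le (fun n => norm_nonneg _) (fun n => ?_)
      (hsum'.mul_right ‖g‖)
    calc ‖ν n g • φ n‖ ≤ ‖ν n g‖ * ‖φ n‖ := ContinuousLinearMap.opNorm_smul_le _ _
      _ ≤ (‖ν n‖ * ‖g‖) * ‖φ n‖ :=
          mul_le_mul_of_nonneg_right ((ν n).le_opNorm g) (norm_nonneg _)
      _ = ‖ν n‖ * ‖φ n‖ * ‖g‖ := by ring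
  have hsummable : Summable fun n => ν n g • φ n := Summable.of_norm hnorms
  have hL : HasSum (fun n => ν n g • φ n) (∑' n, ν n g • φ n) := hsummable.hasSum
  -- partial sums converge to S g
  have key : ∀ K : ℕ, S g - ∑ n ∈ Finset.range K, ν n g • φ n
      = ψ.comp ((S g).smulRight y - ∑ n ∈ Finset.range K, ν n g • N n) := by
    intro K
    ext x
    simp only [ContinuousLinearMap.sub_apply, ContinuousLinearMap.coe_sum',
      Finset.sum_apply, ContinuousLinearMap.smul_apply, ContinuousLinearMap.comp_apply,
      map_sub, map_sum, ContinuousLinearMap.smulRight_apply, hφdef, _root_.map_smul, smul_eq_mul,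
      hψ1, mul_one]
  have hnuc : ∀ K : ℕ, IsNuclear ((S g).smulRight y - ∑ n ∈ Finset.range K, ν n g • N n) :=
    fun K => (IsNuclear.smulRight (S g) y).sub
      (IsNuclear.finsetSum _ _ fun n _ => (hN n).smul (ν n g))
  have hbound : ∀ K : ℕ, ‖S g - ∑ n ∈ Finset.range K, ν n g • φ n‖
      ≤ ‖ψ‖ * nuclearNorm ((S g).smulRight y - ∑ n ∈ Finset.range K, ν n g • N n) := by
    intro K
    rw [key K]
    exact (ψ.opNorm_comp_le _).trans
      (mul_le_mul_of_nonneg_left (norm_le_nuclearNorm (hnuc K)) (norm_nonneg ψ))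
  have htendsto0 : Tendsto (fun K => ‖S g - ∑ n ∈ Finset.range K, ν n g • φ n‖)
      atTop (𝓝 0) := by
    have h2 : Tendsto (fun K => ‖ψ‖ *
        nuclearNorm ((S g).smulRight y - ∑ n ∈ Finset.range K, ν n g • N n)) atTop (𝓝 0) := by
      simpa using (happrox g).const_mul ‖ψ‖
    exact squeeze_zero (fun K => norm_nonneg _) hbound h2
  have hpartial : Tendsto (fun K => ∑ n ∈ Finset.range K, ν n g • φ n) atTop (𝓝 (S g)) := by
    rw [tendsto_iff_norm_sub_tendsto_zero]
    simpa [norm_sub_rev] using htendsto0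
  have := tendsto_nhds_unique hL.tendsto_sum_nat hpartial
  rwa [this] at hL
end

section
/- Let Ω be a compact Hausdorff space with its Borel σ-algebra, let E and F be real Banach spaces, let (μ_n) be a sequence of countably additive E*-valued Borel vector measures on Ω, each of bounded variation, and let (y_n) be a sequence in F with Σ_n |μ_n|(Ω)·‖y_n‖ < ∞. For each Borel set B ⊆ Ω, define the nuclear operator G(B) : E → F by G(B)(e) = Σ_n (μ_n(B)(e)) • y_n. Then the nuclear variation of G is finite; more precisely, for every finite partition {B_1, …, B_k} of Ω into Borel sets, Σ_i ‖G(B_i)‖_nuc ≤ Σ_n |μ_n|(Ω)·‖y_n‖. (Proposition 1(ii), bounded nuclear variation.) -/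
open MeasureTheory Filter Topology

/-!
Each `G(B_i)` has the nuclear representation `(μ_n(B_i), y_n)`, so its nuclear norm is at most
`Σ_n ‖μ_n(B_i)‖·‖y_n‖`. Summing over `i` and exchanging the finite sum with the series, the bound
follows from `Σ_i ‖μ_n(B_i)‖ ≤ |μ_n|(Ω)`, which holds because the `B_i` are disjoint.
-/

section Variation

variable {X S : Type*} [NormedAddCommGroup X] [MeasurableSpace S] {m : Set S → X} {B : Set S}

theorem sum_norm_le_variation (hm : BddAbove (partitionSums m B)) {k : ℕ} {A : Fin k → Set S}
    (hA : ∀ i, MeasurableSet (A i)) (hdisj : Pairwise (Function.onFun Disjoint A))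
    (hAB : ∀ i, A i ⊆ B) : ∑ i, ‖m (A i)‖ ≤ variation m B :=
  le_csSup hm ⟨k, A, hA, hdisj, hAB, rfl⟩

theorem norm_le_variation (hm : BddAbove (partitionSums m B)) {A : Set S}
    (hA : MeasurableSet A) (hAB : A ⊆ B) : ‖m A‖ ≤ variation m B := by
  simpa using sum_norm_le_variation hm (A := fun _ : Fin 1 => A) (fun _ => hA)
    Subsingleton.pairwise (fun _ => hAB)

end Variation

theorem nuclearNorm_le_tsum {X Y : Type*} [NormedAddCommGroup X] [NormedSpace ℝ X]
    [NormedAddCommGroup Y] [NormedSpace ℝ Y] {T : X →L[ℝ] Y} (x' : ℕ → (X →L[ℝ] ℝ)) (y : ℕ → Y)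
    (hs : Summable fun n => ‖x' n‖ * ‖y n‖) (hT : ∀ x, HasSum (fun n => x' n x • y n) (T x)) :
    nuclearNorm T ≤ ∑' n, ‖x' n‖ * ‖y n‖ := by
  refine csInf_le ⟨0, ?_⟩ ⟨x', y, hs, hT, rfl⟩
  rintro c ⟨x'', y'', -, -, rfl⟩
  positivity

theorem nuclear_variation_bound_general {Ω : Type*}
    [MeasurableSpace Ω]
    {E F : Type*} [NormedAddCommGroup E] [NormedSpace ℝ E]
    [NormedAddCommGroup F] [NormedSpace ℝ F]
    (μ : ℕ → VectorMeasure Ω (E →L[ℝ] ℝ))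
    (hbv : ∀ n, BddAbove (partitionSums (⇑(μ n)) Set.univ))
    (y : ℕ → F)
    (hsum : Summable fun n => variation (⇑(μ n)) Set.univ * ‖y n‖)
    (G : Set Ω → (E →L[ℝ] F))
    (hG : ∀ B : Set Ω, MeasurableSet B → ∀ e : E, HasSum (fun n => μ n B e • y n) (G B e))
    (k : ℕ) (B : Fin k → Set Ω)
    (hmeas : ∀ i, MeasurableSet (B i))
    (hdisj : Pairwise (Function.onFun Disjoint B)) :
    ∑ i, nuclearNorm (G (B i)) ≤ ∑' n, variation (⇑(μ n)) Set.univ * ‖y n‖ := by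
  have hsummable : ∀ i, Summable fun n => ‖μ n (B i)‖ * ‖y n‖ := fun i =>
    hsum.of_nonneg_of_le (fun n => by positivity) fun n =>
      mul_le_mul_of_nonneg_right (norm_le_variation (hbv n) (hmeas i) (Set.subset_univ _))
        (norm_nonneg _)
  calc ∑ i, nuclearNorm (G (B i)) ≤ ∑ i, ∑' n, ‖μ n (B i)‖ * ‖y n‖ :=
        Finset.sum_le_sum fun i _ => nuclearNorm_le_tsum _ y (hsummable i) (hG _ (hmeas i))
    _ = ∑' n, ∑ i, ‖μ n (B i)‖ * ‖y n‖ :=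
        (Summable.tsum_finsetSum fun i _ => hsummable i).symm
    _ ≤ ∑' n, variation (⇑(μ n)) Set.univ * ‖y n‖ := by
        refine Summable.tsum_le_tsum (fun n => ?_) (summable_sum fun i _ => hsummable i) hsum
        rw [← Finset.sum_mul]
        exact mul_le_mul_of_nonneg_right
          (sum_norm_le_variation (hbv n) hmeas hdisj fun _ => Set.subset_univ _) (norm_nonneg _)

/-- Proposition 1(ii), bounded nuclear variation: for every finite Borel partition
`{B_1, …, B_k}` of `Ω`, `Σ_i ‖G(B_i)‖_nuc ≤ Σ_n |μ_n|(Ω)·‖y_n‖`. -/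
theorem nuclear_variation_bound {Ω : Type*} [TopologicalSpace Ω] [CompactSpace Ω] [T2Space Ω]
    [MeasurableSpace Ω] [BorelSpace Ω]
    {E F : Type*} [NormedAddCommGroup E] [NormedSpace ℝ E] [CompleteSpace E]
    [NormedAddCommGroup F] [NormedSpace ℝ F] [CompleteSpace F]
    (μ : ℕ → VectorMeasure Ω (E →L[ℝ] ℝ))
    (hbv : ∀ n, BddAbove (partitionSums (⇑(μ n)) Set.univ))
    (y : ℕ → F)
    (hsum : Summable fun n => variation (⇑(μ n)) Set.univ * ‖y n‖)
    (G : Set Ω → (E →L[ℝ] F))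
    (hG : ∀ B : Set Ω, MeasurableSet B → ∀ e : E, HasSum (fun n => μ n B e • y n) (G B e))
    (k : ℕ) (B : Fin k → Set Ω)
    (hmeas : ∀ i, MeasurableSet (B i))
    (hdisj : Pairwise (Function.onFun Disjoint B))
    (hcover : ⋃ i, B i = Set.univ) :
    ∑ i, nuclearNorm (G (B i)) ≤ ∑' n, variation (⇑(μ n)) Set.univ * ‖y n‖ :=
  nuclear_variation_bound_general μ hbv y hsum G hG k B hmeas hdisj
end
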